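/- arXiv:2604.21589 — 4 statements merged into one kernel-verified Lean document; each statement's English description precedes it below -/
import Mathlib

section
/- Let G be a connected plane graph with minimum degree at least 2. Let F_1, …, F_t be the faces of G whose degree is not equal to 4, and set s = Σ_{i=1}^{t} (deg(F_i) − 4). Then n₂(G) + n₃(G) ≥ ⌈(s + n₃(G))/2⌉ + 4, where n_i(G) denotes the number of vertices of G of degree i. -/
/-!
Summing `deg F - 4` over all faces (the `4`-faces contribute nothing) gives `2m - 4f`, so
by Euler's formula `n - m + f = 2` we get `s + n₃ = Σ_v (4 - deg v) - 8 + n₃`. As every degree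
is at least `2`, the term `4 - deg v` is `2` at a vertex of degree `2`, `1` at one of degree `3` and
nonpositive elsewhere, whence `s + n₃ ≤ 2 (n₂ + n₃) - 8`.
-/

open SimpleGraph

/-- Reversal of darts, as a permutation of the darts of a graph. -/
def dartReversal {V : Type*} (G : SimpleGraph V) : Equiv.Perm G.Dart :=
  Function.Involutive.toPerm _ (Dart.symm_involutive (G := G))

/-- The face-traversal permutation of a rotation system `rot`: the dart following `d` on
the boundary walk of the face to its left is `rot d.symm`. -/
def facePerm {V : Type*} (G : SimpleGraph V) (rot : Equiv.Perm G.Dart) :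
    Equiv.Perm G.Dart :=
  (dartReversal G).trans rot

/-- The faces of a rotation system: the orbits of the face-traversal permutation, viewed
as sets of darts.  The degree of a face (the number of edge-occurrences on its boundary
walk) is the number of darts in the orbit, i.e. `F.ncard`; the occurrences of a vertex `w`
on the boundary walk of `F` correspond to the darts `d ∈ F` with tail `d.toProd.1 = w`. -/
def facesOf {V : Type*} (G : SimpleGraph V) (rot : Equiv.Perm G.Dart) :
    Set (Set G.Dart) :=
  {F | ∃ d : G.Dart, F = {d' | (facePerm G rot).SameCycle d d'}}

/-- The face (orbit of the face-traversal permutation) containing a given dart. -/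
def faceOf {V : Type*} (G : SimpleGraph V) (rot : Equiv.Perm G.Dart) (d : G.Dart) :
    Set G.Dart :=
  {d' | (facePerm G rot).SameCycle d d'}

/-- A plane graph structure (planar embedding) on a simple graph `G`, given combinatorially
by a rotation system: a permutation of the darts that fixes tails of darts and whose cycles
are precisely the sets of darts at each vertex, which satisfies Euler's formula (this is
exactly the condition that the embedding determined by the rotation system has genus zero,
i.e. is an embedding in the plane). -/
structure SimpleGraph.PlaneEmbedding {V : Type*} [Fintype V] (G : SimpleGraph V) where
  /-- the rotation: the next dart (counterclockwise) around the tail vertex -/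
  rot : Equiv.Perm G.Dart
  rot_fixes_tail : ∀ d : G.Dart, (rot d).toProd.1 = d.toProd.1
  rot_single_cycle : ∀ d d' : G.Dart, d.toProd.1 = d'.toProd.1 → rot.SameCycle d d'
  /-- Euler's formula, componentwise (components with no edge contribute `1` each, the
  others `2` each); equivalently, every component is embedded with genus zero. -/
  euler : (Fintype.card V : ℤ) - Nat.card G.edgeSet + (facesOf G rot).ncard =
    Nat.card G.ConnectedComponent +
      Nat.card {C : G.ConnectedComponent //
        ∃ d : G.Dart, G.connectedComponentMk d.toProd.1 = C}

namespace SimpleGraph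

variable {V : Type*} (G : SimpleGraph V)

theorem natCard_dart_eq_two_mul_natCard_edgeSet [Fintype V] :
    Nat.card G.Dart = 2 * Nat.card G.edgeSet := by
  classical
  rw [Nat.card_eq_fintype_card, dart_card_eq_twice_card_edges, edgeFinset_card,
    Nat.card_eq_fintype_card]

theorem sum_natCard_neighborSet [Fintype V] :
    ∑ v, Nat.card (G.neighborSet v) = 2 * Nat.card G.edgeSet := by
  classical
  rw [← natCard_dart_eq_two_mul_natCard_edgeSet, Nat.card_eq_fintype_card,
    dart_card_eq_sum_degrees]
  simp only [Nat.card_eq_fintype_card, card_neighborSet_eq_degree]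

theorem four_mul_card_sub_two_mul_natCard_edgeSet_le [Fintype V]
    (hδ : ∀ v, 2 ≤ Nat.card (G.neighborSet v)) :
    4 * (Fintype.card V : ℤ) - 2 * Nat.card G.edgeSet ≤
      2 * {v | Nat.card (G.neighborSet v) = 2}.ncard +
        {v | Nat.card (G.neighborSet v) = 3}.ncard := by
  classical
  set deg := fun v ↦ Nat.card (G.neighborSet v)
  have hcount (k : ℕ) : ({v | deg v = k}.ncard : ℤ) = ∑ v, if deg v = k then 1 else 0 := by
    rw [Set.ncard_eq_toFinset_card', Set.toFinset_ofPred, Finset.natCast_card_filter]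
  calc 4 * (Fintype.card V : ℤ) - 2 * Nat.card G.edgeSet = ∑ v, (4 - deg v : ℤ) := by
        rw [Finset.sum_sub_distrib, ← Nat.cast_sum, sum_natCard_neighborSet]
        simp [mul_comm]
    _ ≤ ∑ v, (2 * (if deg v = 2 then 1 else 0) + (if deg v = 3 then 1 else 0) : ℤ) := by
        refine Finset.sum_le_sum fun v _ ↦ ?_
        have : 2 ≤ deg v := hδ v
        split_ifs <;> omega
    _ = _ := by rw [Finset.sum_add_distrib, ← Finset.mul_sum, hcount, hcount]

variable (rot : Equiv.Perm G.Dart)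

theorem facesOf_eq_classes :
    facesOf G rot = (Equiv.Perm.SameCycle.setoid (facePerm G rot)).classes := by
  ext F
  refine exists_congr fun d ↦ ?_
  rw [show {d' | (facePerm G rot).SameCycle d d'} = {d' | (facePerm G rot).SameCycle d' d} from
    Set.ext fun _ ↦ Equiv.Perm.sameCycle_comm]
  rfl

theorem finsum_ncard_facesOf [Finite G.Dart] :
    ∑ᶠ F ∈ facesOf G rot, F.ncard = Nat.card G.Dart := by
  rw [← Set.ncard_univ, (Setoid.isPartition_classes _).ncard_eq_finsum,
    ← facesOf_eq_classes G rot, ← finsum_set_coe_eq_finsum_mem]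
  simp only [Set.univ_inter]

theorem finsum_ncard_sub_four_facesOf [Finite G.Dart] :
    ∑ᶠ F ∈ {F ∈ facesOf G rot | F.ncard ≠ 4}, ((F.ncard : ℚ) - 4) =
      Nat.card G.Dart - 4 * (facesOf G rot).ncard := by
  have hfin : (facesOf G rot).Finite := Set.toFinite _
  have hsupp : {F ∈ facesOf G rot | F.ncard ≠ 4} =
      facesOf G rot ∩ Function.support fun F : Set G.Dart ↦ (F.ncard : ℚ) - 4 := by
    ext F
    simp only [Set.mem_sep_iff, Set.mem_inter_iff, Function.mem_support, sub_ne_zero]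
    norm_cast
  rw [hsupp, finsum_mem_inter_support, ← finsum_ncard_facesOf G rot, Nat.cast_finsum_mem hfin,
    finsum_mem_eq_finite_toFinset_sum _ hfin, finsum_mem_eq_finite_toFinset_sum _ hfin,
    Finset.sum_sub_distrib, Finset.sum_const, Set.ncard_eq_toFinset_card _ hfin, nsmul_eq_mul,
    mul_comm]

variable {G}

theorem PlaneEmbedding.euler_of_connected [Fintype V] (E : G.PlaneEmbedding) (hconn : G.Connected)
    (hdart : Nonempty G.Dart) :
    (Fintype.card V : ℤ) - Nat.card G.edgeSet + (facesOf G E.rot).ncard = 2 := by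
  have := hconn.preconnected.subsingleton_connectedComponent
  obtain ⟨d⟩ := hdart
  have hcomp : Nat.card G.ConnectedComponent = 1 :=
    Nat.card_eq_one_iff_unique.2 ⟨inferInstance, ⟨G.connectedComponentMk d.toProd.1⟩⟩
  have hcomp' : Nat.card {C : G.ConnectedComponent //
      ∃ d : G.Dart, G.connectedComponentMk d.toProd.1 = C} = 1 :=
    Nat.card_eq_one_iff_unique.2 ⟨inferInstance, ⟨⟨_, d, rfl⟩⟩⟩
  have := E.euler
  rw [hcomp, hcomp'] at this
  omega

end SimpleGraph

/-- Let `G` be a connected plane graph with minimum degree at least `2`, let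
`s = Σ (deg(Fᵢ) − 4)`, the sum running over the faces `Fᵢ` whose degree is not `4`.
Then `n₂(G) + n₃(G) ≥ ⌈(s + n₃(G))/2⌉ + 4`, where `nᵢ(G)` is the number of vertices of
degree `i`. -/
theorem plane_exceptional_faces_low_degree {V : Type*} [Fintype V] (G : SimpleGraph V)
    (E : G.PlaneEmbedding) (hconn : G.Connected)
    (hδ : ∀ v : V, 2 ≤ Nat.card (G.neighborSet v)) :
    ⌈((∑ᶠ F ∈ {F ∈ facesOf G E.rot | F.ncard ≠ 4}, ((F.ncard : ℚ) - 4)) +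
        ({v : V | Nat.card (G.neighborSet v) = 3}.ncard : ℚ)) / 2⌉ + 4 ≤
      ({v : V | Nat.card (G.neighborSet v) = 2}.ncard : ℤ) +
        ({v : V | Nat.card (G.neighborSet v) = 3}.ncard : ℤ) := by
  classical
  obtain ⟨v⟩ := hconn.nonempty
  have hdart : Nonempty G.Dart := by
    obtain ⟨⟨w, hw⟩⟩ := (Nat.card_pos_iff.1 (lt_of_lt_of_le two_pos (hδ v))).1
    exact ⟨⟨(v, w), hw⟩⟩
  have heuler : (Fintype.card V : ℚ) - Nat.card G.edgeSet + (facesOf G E.rot).ncard = 2 := by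
    exact_mod_cast E.euler_of_connected hconn hdart
  have hvert : 4 * (Fintype.card V : ℚ) - 2 * Nat.card G.edgeSet ≤
      2 * {v | Nat.card (G.neighborSet v) = 2}.ncard +
        {v | Nat.card (G.neighborSet v) = 3}.ncard := by
    exact_mod_cast G.four_mul_card_sub_two_mul_natCard_edgeSet_le hδ
  rw [finsum_ncard_sub_four_facesOf, natCard_dart_eq_two_mul_natCard_edgeSet,
    ← le_sub_iff_add_le, Int.ceil_le]
  push_cast
  linarith
end

section
/- Let G be a connected 1-plane graph with n ≥ 3 vertices and m edges. Then m = 3n − 6 − (A(G) + B(G))/2 − (3/4)·C(G). -/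
open SimpleGraph

/-- Given a rotation system `rot` on a graph `H` whose vertices are the true vertices `V`
together with the fake vertices `X` (the crossings), `CrossPair rot x u v` says that the
darts from the fake vertex `x` towards `u` and towards `v` are opposite around `x` (i.e.
the segments `xu` and `xv` are the two halves of one original edge `uv` crossed at `x`). -/
def CrossPair {V X : Type*} {H : SimpleGraph (V ⊕ X)} (rot : Equiv.Perm H.Dart)
    (x : X) (u v : V) : Prop :=
  ∃ d : H.Dart, d.toProd = (Sum.inr x, Sum.inl u) ∧
    (rot (rot d)).toProd = (Sum.inr x, Sum.inl v)

/-- A 1-plane structure on a simple graph `G` (i.e. a 1-planar drawing of `G`, recorded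
combinatorially via its planarization): a plane embedding of a graph `H` on the vertex set
`V ⊕ X`, where `V` are the true vertices of `G` and `X` are the fake vertices (one for each
crossing of the drawing), such that every fake vertex has degree `4` (exactly two edges
cross at each crossing point), fake vertices are pairwise non-adjacent (each edge of `G` is
crossed at most once, so each half-edge at a crossing ends at a true vertex), and the edges
of `G` are exactly the uncrossed edges of `H` between true vertices together with, for each
fake vertex `x`, the two edges joining the two pairs of opposite neighbours of `x` (each
crossed edge of `G` being subdivided by exactly one fake vertex). -/
structure OnePlaneStructure {V X : Type*} [Fintype V] [Fintype X]
    (G : SimpleGraph V) (H : SimpleGraph (V ⊕ X)) where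
  /-- the plane embedding of the planarization `H = G^×` -/
  emb : H.PlaneEmbedding
  fake_degree : ∀ x : X, Nat.card {d : H.Dart // d.toProd.1 = Sum.inr x} = 4
  fake_not_adjacent : ∀ x y : X, ¬ H.Adj (Sum.inr x) (Sum.inr y)
  adj_iff : ∀ u v : V, G.Adj u v ↔
    (H.Adj (Sum.inl u) (Sum.inl v) ∨ ∃ x : X, CrossPair emb.rot x u v)
  uncrossed_not_crossed : ∀ u v : V, H.Adj (Sum.inl u) (Sum.inl v) →
    ∀ x : X, ¬ CrossPair emb.rot x u v
  cross_unique : ∀ (x x' : X) (u v : V),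
    CrossPair emb.rot x u v → CrossPair emb.rot x' u v → x = x'

namespace OnePlaneStructure

variable {V X : Type*} [Fintype V] [Fintype X] {G : SimpleGraph V}
  {H : SimpleGraph (V ⊕ X)}

/-- `a(z)`: the number of incidences, counted with multiplicity, of the fake vertex `z`
with the `4⁺`-faces of the planarization. -/
noncomputable def aVal (S : OnePlaneStructure G H) (z : X) : ℕ :=
  {d : H.Dart | d.toProd.1 = Sum.inr z ∧ 4 ≤ (faceOf H S.emb.rot d).ncard}.ncard

/-- `c(F)`: the number of occurrences of fake vertices on the boundary walk of `F`. -/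
noncomputable def cVal (F : Set H.Dart) : ℕ :=
  {d ∈ F | (d.toProd.1).isRight = true}.ncard

/-- `A(G) = Σ_{z fake} (a(z) − 2)` (as a rational number). -/
noncomputable def AVal (S : OnePlaneStructure G H) : ℚ := ∑ z : X, ((S.aVal z : ℚ) - 2)

/-- `B(G) = Σ_{F : deg(F) ≥ 4} (deg(F)/2 − c(F))`. -/
noncomputable def BVal (S : OnePlaneStructure G H) : ℚ :=
  ∑ᶠ F ∈ {F ∈ facesOf H S.emb.rot | 4 ≤ F.ncard}, ((F.ncard : ℚ) / 2 - cVal F)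

/-- `C(G) = Σ_{F : deg(F) ≥ 4} (deg(F) − 4)`. -/
noncomputable def CVal (S : OnePlaneStructure G H) : ℚ :=
  ∑ᶠ F ∈ {F ∈ facesOf H S.emb.rot | 4 ≤ F.ncard}, ((F.ncard : ℚ) - 4)

end OnePlaneStructure

/-!
Each crossing turns two edges of `G` into four edges of the planarization `G^×`, so
`|E(G^×)| = m + 2 cr`, where `cr` is the number of fake vertices. In the connected plane graph
`G^×` every face has degree at least `3`, so Euler's formula and the face handshake
`∑_F deg F = 2 |E(G^×)|` give `∑_{deg F ≥ 4} (deg F - 3) = 3 (n + cr) - 6 - |E(G^×)|`.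
Together with `∑_{deg F ≥ 4} c(F) = ∑_z a(z)` (both sides count the darts that leave a fake
vertex along a `4⁺`-face), the formula becomes a linear combination of these identities.
-/

open Finset

namespace Equiv.Perm

variable {α : Type*} (f : Perm α)

theorem three_le_ncard_sameCycle [Finite α] {a : α} (h₁ : f a ≠ a) (h₂ : f (f a) ≠ a) :
    3 ≤ {b | f.SameCycle a b}.ncard :=
  (Set.two_lt_ncard_iff (Set.toFinite _)).2 ⟨a, f a, f (f a), .rfl, sameCycle_apply_right.2 .rfl,
    sameCycle_apply_right.2 (sameCycle_apply_right.2 .rfl), h₁.symm, h₂.symm,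
    fun h => h₁ (f.injective h).symm⟩

theorem setOf_sameCycle_eq_iff {a b : α} :
    {c | f.SameCycle a c} = {c | f.SameCycle b c} ↔ f.SameCycle b a :=
  ⟨fun h => (Set.ext_iff.1 h a).1 .rfl,
    fun h => Set.ext fun _ => ⟨h.trans, h.symm.trans⟩⟩

theorem sum_ncard_inter_sameCycle [Fintype α] [DecidableEq (Set α)] (s : Set α) :
    ∑ F ∈ univ.image (fun a => {b | f.SameCycle a b}), (F ∩ s).ncard = s.ncard := by
  classical
  rw [Set.ncard_eq_toFinset_card', card_eq_sum_card_fiberwise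
    (t := univ.image fun a => {b | f.SameCycle a b}) fun a _ => mem_image_of_mem _ (mem_univ a)]
  refine sum_congr rfl fun F hF => ?_
  obtain ⟨b, -, rfl⟩ := mem_image.1 hF
  rw [← Set.ncard_coe_finset]
  congr 1
  ext a
  simp [setOf_sameCycle_eq_iff, and_comm]

end Equiv.Perm

theorem Set.sum_ncard_setOf_eq_inr {α β γ : Type*} [Finite α] [Fintype γ] (κ : α → β ⊕ γ)
    (p : α → Prop) :
    ∑ x : γ, {a | κ a = .inr x ∧ p a}.ncard = {a | (κ a).isRight ∧ p a}.ncard := by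
  classical
  have := Fintype.ofFinite α
  simp only [Set.ncard_eq_toFinset_card', Set.toFinset_ofPred]
  rw [card_eq_sum_card_fiberwise (f := κ) (t := Finset.univ.map .inr) fun a ha => by
    obtain ⟨y, hy⟩ := Sum.isRight_iff.1 (mem_filter.1 ha).2.1
    simp [hy], sum_map]
  refine sum_congr rfl fun x _ => congrArg card (Finset.ext fun a => ?_)
  simp only [Finset.mem_filter, Finset.mem_univ, true_and, Function.Embedding.inr_apply]
  exact ⟨fun ⟨hx, hp⟩ => ⟨⟨by simp [hx], hp⟩, hx⟩, (fun ⟨⟨_, hp⟩, hx⟩ => ⟨hx, hp⟩)⟩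

namespace SimpleGraph

instance Dart.finite {V : Type*} {G : SimpleGraph V} [Finite V] : Finite G.Dart :=
  .of_injective _ Dart.toProd_injective

theorem card_dart_eq_two_mul_card_edgeSet {V : Type*} [Finite V] (G : SimpleGraph V) :
    Nat.card G.Dart = 2 * Nat.card G.edgeSet := by
  classical
  have := Fintype.ofFinite V
  rw [Nat.card_eq_fintype_card, dart_card_eq_twice_card_edges, edgeFinset_card,
    Nat.card_eq_fintype_card]

theorem Reachable.mem_of_adj_closed {V : Type*} {G : SimpleGraph V} {s : Set V}
    (hs : ∀ v w, v ∈ s → G.Adj v w → w ∈ s) {u w : V} (h : G.Reachable u w) (hu : u ∈ s) :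
    w ∈ s := by
  obtain ⟨p⟩ := h
  induction p with
  | nil => exact hu
  | cons hadj _ ih => exact ih (hs _ _ hu hadj)

theorem Connected.card_le_two_of_forall_adj_eq {V : Type*} [Fintype V] {G : SimpleGraph V}
    (hG : G.Connected) {u v : V} (hu : ∀ w, G.Adj u w → w = v) (hv : ∀ w, G.Adj v w → w = u) :
    Fintype.card V ≤ 2 := by
  classical
  have hmem : ∀ w, w = u ∨ w = v := fun w =>
    (hG.preconnected u w).mem_of_adj_closed (s := {w | w = u ∨ w = v})
      (by rintro a b (rfl | rfl) hab; exacts [.inr (hu b hab), .inl (hv b hab)]) (.inl rfl)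
  rw [← card_univ]
  exact (card_le_card fun w _ => by simpa using hmem w).trans card_le_two

end SimpleGraph

theorem facesOf_eq_coe_image {W : Type*} (K : SimpleGraph W) [Fintype K.Dart]
    [DecidableEq (Set K.Dart)] (rot : Equiv.Perm K.Dart) :
    facesOf K rot = ↑(univ.image (faceOf K rot)) := by
  ext F
  simp [facesOf, faceOf, eq_comm]

theorem sep_facesOf_eq_coe_filter {W : Type*} (K : SimpleGraph W) [Fintype K.Dart]
    [DecidableEq (Set K.Dart)] (rot : Equiv.Perm K.Dart) (p : Set K.Dart → Prop)
    [DecidablePred p] :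
    {F ∈ facesOf K rot | p F} = ↑((univ.image (faceOf K rot)).filter p) := by
  ext F
  simp [facesOf_eq_coe_image]

theorem sum_ncard_faceOf {W : Type*} (K : SimpleGraph W) [Fintype K.Dart]
    [DecidableEq (Set K.Dart)] (rot : Equiv.Perm K.Dart) :
    ∑ F ∈ univ.image (faceOf K rot), F.ncard = Fintype.card K.Dart := by
  have h := (facePerm K rot).sum_ncard_inter_sameCycle Set.univ
  simp only [Set.inter_univ, Set.ncard_univ, Nat.card_eq_fintype_card] at h
  exact h

namespace SimpleGraph.PlaneEmbedding

variable {W : Type*} [Fintype W] {K : SimpleGraph W} (E : K.PlaneEmbedding)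

theorem fst_facePerm (d : K.Dart) : (facePerm K E.rot d).fst = d.snd :=
  E.rot_fixes_tail d.symm

theorem facePerm_ne (d : K.Dart) : facePerm K E.rot d ≠ d := fun h =>
  d.adj.ne (by simpa [h] using E.fst_facePerm d)

theorem adj_eq_snd_of_rot_eq_self {d : K.Dart} (hd : E.rot d = d) {w : W}
    (hw : K.Adj d.fst w) : w = d.snd := by
  have : (⟨(d.fst, w), hw⟩ : K.Dart) = d :=
    ((E.rot_single_cycle d ⟨(d.fst, w), hw⟩ rfl).eq_of_left hd).symm
  exact congrArg (·.snd) this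

theorem rot_eq_self_of_facePerm_facePerm_eq {d : K.Dart}
    (h : facePerm K E.rot (facePerm K E.rot d) = d) :
    E.rot d = d ∧ E.rot d.symm = d.symm := by
  have hrev : facePerm K E.rot d = d.symm := Dart.toProd_injective (Prod.ext (E.fst_facePerm d)
    (by rw [← E.fst_facePerm (facePerm K E.rot d), h]; rfl))
  refine ⟨?_, hrev⟩
  rw [hrev] at h
  simpa [facePerm, dartReversal] using h

/-- A face of degree two runs along `d` and back along `d.symm`; then both ends of `d` have
degree one, so the connected graph `K` is a single edge. -/
theorem three_le_ncard_faceOf (hK : K.Connected) (hcard : 3 ≤ Fintype.card W) (d : K.Dart) :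
    3 ≤ (faceOf K E.rot d).ncard := by
  refine (facePerm K E.rot).three_le_ncard_sameCycle (E.facePerm_ne d) fun h => ?_
  obtain ⟨hd, hd'⟩ := E.rot_eq_self_of_facePerm_facePerm_eq h
  have := hK.card_le_two_of_forall_adj_eq (fun _ => E.adj_eq_snd_of_rot_eq_self hd)
    (fun _ => E.adj_eq_snd_of_rot_eq_self hd')
  omega

theorem euler_of_connected_s13 (hK : K.Connected) (d : K.Dart) :
    (Fintype.card W : ℤ) - Nat.card K.edgeSet + (facesOf K E.rot).ncard = 2 := by
  have := hK.preconnected.subsingleton_connectedComponent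
  have hcomp : Nat.card K.ConnectedComponent = 1 :=
    Nat.card_eq_one_iff_unique.2 ⟨inferInstance, ⟨K.connectedComponentMk d.fst⟩⟩
  have hcomp' : Nat.card {C : K.ConnectedComponent //
      ∃ d : K.Dart, K.connectedComponentMk d.fst = C} = 1 :=
    Nat.card_eq_one_iff_unique.2 ⟨inferInstance, ⟨⟨_, d, rfl⟩⟩⟩
  have := E.euler
  rw [hcomp, hcomp'] at this
  omega

theorem sum_filter_ncard_sub_three [Fintype K.Dart] [DecidableEq (Set K.Dart)]
    (hK : K.Connected) (hcard : 3 ≤ Fintype.card W) :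
    ∑ F ∈ univ.image (faceOf K E.rot) with 4 ≤ F.ncard, ((F.ncard : ℚ) - 3) =
      2 * Nat.card K.edgeSet - 3 * #(univ.image (faceOf K E.rot)) := by
  rw [sum_filter_of_ne, sum_sub_distrib, ← Nat.cast_sum, sum_ncard_faceOf, sum_const,
    nsmul_eq_mul, mul_comm, ← Nat.card_eq_fintype_card, K.card_dart_eq_two_mul_card_edgeSet]
  · push_cast; ring
  · intro F hF hne
    obtain ⟨d, -, rfl⟩ := mem_image.1 hF
    have := E.three_le_ncard_faceOf hK hcard d
    by_contra h
    exact hne (by rw [show (faceOf K E.rot d).ncard = 3 by omega]; norm_num)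

end SimpleGraph.PlaneEmbedding

namespace OnePlaneStructure

variable {V X : Type*} [Fintype V] [Fintype X] {G : SimpleGraph V}
  {H : SimpleGraph (V ⊕ X)}

theorem exists_snd_eq_inl (S : OnePlaneStructure G H) {x : X} {d : H.Dart}
    (hd : d.fst = .inr x) : ∃ u, d.snd = .inl u := by
  rcases h : d.snd with u | y
  · exact ⟨u, rfl⟩
  · have := d.adj
    rw [hd, h] at this
    exact (S.fake_not_adjacent x y this).elim

theorem exists_dart_fst_eq_inr (S : OnePlaneStructure G H) (x : X) :
    ∃ d : H.Dart, d.fst = .inr x := by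
  obtain ⟨d, hd⟩ := (Nat.card_pos_iff.1 (by rw [S.fake_degree x]; norm_num)).1
  exact ⟨d, hd⟩

theorem exists_crossPair (S : OnePlaneStructure G H) {x : X} {d : H.Dart}
    (hd : d.fst = .inr x) : ∃ u v, d.snd = .inl u ∧ (S.emb.rot (S.emb.rot d)).snd = .inl v ∧
      CrossPair S.emb.rot x u v := by
  have hd₂ : (S.emb.rot (S.emb.rot d)).fst = .inr x := by
    rw [S.emb.rot_fixes_tail, S.emb.rot_fixes_tail, hd]
  obtain ⟨u, hu⟩ := S.exists_snd_eq_inl hd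
  obtain ⟨v, hv⟩ := S.exists_snd_eq_inl hd₂
  exact ⟨u, v, hu, hv, d, Prod.ext hd hu, Prod.ext hd₂ hv⟩

theorem reachable_inl_of_adj (S : OnePlaneStructure G H) {u v : V} (h : G.Adj u v) :
    H.Reachable (.inl u) (.inl v) := by
  rcases (S.adj_iff u v).1 h with h | ⟨x, d, hd, hd₂⟩
  · exact h.reachable
  · have hu : H.Adj (.inr x) (.inl u) := by simpa [hd] using d.adj
    have hv : H.Adj (.inr x) (.inl v) := by simpa [hd₂] using (S.emb.rot (S.emb.rot d)).adj
    exact hu.symm.reachable.trans hv.reachable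

theorem planarization_connected (S : OnePlaneStructure G H) (hG : G.Connected) : H.Connected := by
  obtain ⟨u₀⟩ := hG.nonempty
  have hV : ∀ u, H.Reachable (.inl u₀) (.inl u) := fun u =>
    (hG.preconnected u₀ u).mem_of_adj_closed (s := {w | H.Reachable (.inl u₀) (.inl w)})
      (fun _ _ ha hab => ha.trans (S.reachable_inl_of_adj hab)) .rfl
  refine H.connected_iff_exists_forall_reachable.2 ⟨.inl u₀, ?_⟩
  rintro (u | x)
  · exact hV u
  · obtain ⟨d, hd⟩ := S.exists_dart_fst_eq_inr x
    obtain ⟨u, hu⟩ := S.exists_snd_eq_inl hd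
    have hadj : H.Adj (.inr x) (.inl u) := hd ▸ hu ▸ d.adj
    exact (hV u).trans hadj.symm.reachable

theorem ncard_fst_isRight (S : OnePlaneStructure G H) :
    {d : H.Dart | d.fst.isRight}.ncard = 4 * Fintype.card X := by
  have h := Set.sum_ncard_setOf_eq_inr (fun d : H.Dart => d.fst) (fun _ => True)
  simp only [and_true] at h
  rw [← h, Finset.sum_congr rfl fun x _ =>
    (Nat.card_coe_set_eq {d : H.Dart | d.fst = .inr x}).symm.trans (S.fake_degree x)]
  simp [mul_comm]

/-- A dart of `H` from a crossing `x` to `u` corresponds to the crossed dart `u → v` of `G`,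
where `v` is the head of the opposite dart at `x`. -/
theorem ncard_crossed_darts (S : OnePlaneStructure G H) :
    {d : G.Dart | ∃ x, CrossPair S.emb.rot x d.fst d.snd}.ncard =
      {d : H.Dart | d.fst.isRight}.ncard := by
  let heads : H.Dart → (V ⊕ X) × (V ⊕ X) := fun d => (d.snd, (S.emb.rot (S.emb.rot d)).snd)
  let embed : G.Dart → (V ⊕ X) × (V ⊕ X) := Prod.map .inl .inl ∘ Dart.toProd
  have hembed : embed.Injective :=
    (Sum.inl_injective.prodMap Sum.inl_injective).comp Dart.toProd_injective
  have hheads : Set.InjOn heads {d | d.fst.isRight} := by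
    rintro d hd d' hd' h
    obtain ⟨x, hx⟩ := Sum.isRight_iff.1 hd
    obtain ⟨x', hx'⟩ := Sum.isRight_iff.1 hd'
    obtain ⟨u, v, hu, hv, hc⟩ := S.exists_crossPair hx
    obtain ⟨u', v', hu', hv', hc'⟩ := S.exists_crossPair hx'
    simp only [heads, Prod.mk.injEq, hu, hv, hu', hv', Sum.inl.injEq] at h
    obtain ⟨rfl, rfl⟩ := h
    obtain rfl := S.cross_unique x x' u v hc hc'
    exact Dart.toProd_injective (Prod.ext (hx.trans hx'.symm) (hu.trans hu'.symm))
  have himage : heads '' {d | d.fst.isRight} =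
      embed '' {d | ∃ x, CrossPair S.emb.rot x d.fst d.snd} := by
    ext p
    constructor
    · rintro ⟨d, hd, rfl⟩
      obtain ⟨x, hx⟩ := Sum.isRight_iff.1 hd
      obtain ⟨u, v, hu, hv, hc⟩ := S.exists_crossPair hx
      exact ⟨⟨(u, v), (S.adj_iff u v).2 (.inr ⟨x, hc⟩)⟩, ⟨x, hc⟩, by simp [heads, embed, hu, hv]⟩
    · rintro ⟨e, ⟨x, d, hd, hd₂⟩, rfl⟩
      refine ⟨d, by simp [congrArg Prod.fst hd], ?_⟩
      simp [heads, embed, Prod.ext_iff, congrArg Prod.snd hd, congrArg Prod.snd hd₂]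
  rw [← hheads.ncard_image, himage, Set.ncard_image_of_injective _ hembed]

theorem ncard_uncrossed_darts (S : OnePlaneStructure G H) :
    {d : G.Dart | H.Adj (.inl d.fst) (.inl d.snd)}.ncard =
      {d : H.Dart | d.fst.isLeft ∧ d.snd.isLeft}.ncard := by
  let embed : G.Dart → (V ⊕ X) × (V ⊕ X) := Prod.map .inl .inl ∘ Dart.toProd
  have hembed : embed.Injective :=
    (Sum.inl_injective.prodMap Sum.inl_injective).comp Dart.toProd_injective
  have himage : embed '' {d | H.Adj (.inl d.fst) (.inl d.snd)} =
      Dart.toProd '' {d : H.Dart | d.fst.isLeft ∧ d.snd.isLeft} := by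
    ext p
    constructor
    · rintro ⟨d, hd, rfl⟩
      exact ⟨⟨(.inl d.fst, .inl d.snd), hd⟩, by simp, rfl⟩
    · rintro ⟨d, ⟨hu, hv⟩, rfl⟩
      obtain ⟨u, hu⟩ := Sum.isLeft_iff.1 hu
      obtain ⟨v, hv⟩ := Sum.isLeft_iff.1 hv
      have hadj : H.Adj (.inl u) (.inl v) := hu ▸ hv ▸ d.adj
      exact ⟨⟨(u, v), (S.adj_iff u v).2 (.inl hadj)⟩, hadj, Prod.ext hu.symm hv.symm⟩
  rw [← Set.ncard_image_of_injective _ hembed, himage,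
    Set.ncard_image_of_injective _ Dart.toProd_injective]

theorem card_dart_eq_uncrossed_add_crossed (S : OnePlaneStructure G H) :
    Nat.card G.Dart = {d : G.Dart | H.Adj (.inl d.fst) (.inl d.snd)}.ncard +
      {d : G.Dart | ∃ x, CrossPair S.emb.rot x d.fst d.snd}.ncard := by
  rw [← Set.ncard_add_ncard_compl {d : G.Dart | H.Adj (.inl d.fst) (.inl d.snd)}]
  congr 2
  ext d
  simp only [Set.mem_compl_iff, Set.mem_ofPred_eq]
  refine ⟨fun h => ((S.adj_iff _ _).1 d.adj).resolve_left h, fun ⟨x, hx⟩ h => ?_⟩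
  exact S.uncrossed_not_crossed _ _ h x hx

theorem card_planarization_dart_eq (S : OnePlaneStructure G H) :
    Nat.card H.Dart = {d : H.Dart | d.fst.isLeft ∧ d.snd.isLeft}.ncard +
      2 * {d : H.Dart | d.fst.isRight}.ncard := by
  have hsymm : {d : H.Dart | d.snd.isRight}.ncard = {d : H.Dart | d.fst.isRight}.ncard := by
    rw [← Set.ncard_image_of_injective {d : H.Dart | d.fst.isRight}
      Dart.symm_involutive.injective]
    congr 1
    ext d
    exact ⟨fun hd => ⟨d.symm, hd, d.symm_symm⟩, fun ⟨e, he, hed⟩ => hed ▸ he⟩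
  have hsplit : (Set.univ : Set H.Dart) = ({d | d.fst.isRight} ∪ {d | d.snd.isRight}) ∪
      {d | d.fst.isLeft ∧ d.snd.isLeft} := by
    ext ⟨⟨a | x, b | y⟩, h⟩ <;> simp
  have hdisj : Disjoint {d : H.Dart | d.fst.isRight} {d | d.snd.isRight} := by
    refine Set.disjoint_left.2 fun ⟨⟨a, b⟩, h⟩ ha hb => ?_
    obtain ⟨x, rfl⟩ := Sum.isRight_iff.1 ha
    obtain ⟨y, rfl⟩ := Sum.isRight_iff.1 hb
    exact S.fake_not_adjacent x y h
  have hdisj' : Disjoint ({d : H.Dart | d.fst.isRight} ∪ {d | d.snd.isRight})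
      {d | d.fst.isLeft ∧ d.snd.isLeft} := by
    refine Set.disjoint_left.2 fun ⟨⟨a, b⟩, h⟩ hab ⟨ha, hb⟩ => ?_
    cases a <;> cases b <;> simp_all
  rw [← Set.ncard_univ, hsplit, Set.ncard_union_eq hdisj', Set.ncard_union_eq hdisj, hsymm]
  ring

theorem card_edgeSet_add_two_mul_card_crossings (S : OnePlaneStructure G H) :
    Nat.card G.edgeSet + 2 * Fintype.card X = Nat.card H.edgeSet := by
  have hG := G.card_dart_eq_two_mul_card_edgeSet
  have hH := H.card_dart_eq_two_mul_card_edgeSet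
  rw [S.card_dart_eq_uncrossed_add_crossed, S.ncard_uncrossed_darts, S.ncard_crossed_darts] at hG
  rw [S.card_planarization_dart_eq] at hH
  have := S.ncard_fst_isRight
  omega

theorem sum_cVal_eq_sum_aVal (S : OnePlaneStructure G H) [Fintype H.Dart]
    [DecidableEq (Set H.Dart)] :
    ∑ F ∈ univ.image (faceOf H S.emb.rot) with 4 ≤ F.ncard, cVal F = ∑ z, S.aVal z := by
  set face := faceOf H S.emb.rot
  have hA := Set.sum_ncard_setOf_eq_inr (fun d : H.Dart => d.fst) (fun d => 4 ≤ (face d).ncard)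
  have hF := (facePerm H S.emb.rot).sum_ncard_inter_sameCycle
    {d : H.Dart | d.fst.isRight ∧ 4 ≤ (face d).ncard}
  simp only [aVal]
  rw [hA, ← hF, sum_filter]
  refine sum_congr rfl fun F hF => ?_
  obtain ⟨b, -, rfl⟩ := mem_image.1 hF
  have hface : ∀ d ∈ face b, face d = face b := fun d hd =>
    (Equiv.Perm.setOf_sameCycle_eq_iff _).2 hd
  split_ifs with h4
  · refine congrArg Set.ncard (Set.ext fun d => ?_)
    simp only [Set.mem_inter_iff, Set.mem_ofPred_eq]
    exact ⟨fun ⟨hd, hr⟩ => ⟨hd, hr, hface d hd ▸ h4⟩, fun ⟨hd, hr, _⟩ => ⟨hd, hr⟩⟩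
  · refine ((Set.ncard_eq_zero (Set.toFinite _)).2 (Set.eq_empty_of_forall_notMem ?_)).symm
    rintro d ⟨hd, -, hd4⟩
    rw [hface d hd] at hd4
    exact h4 hd4

end OnePlaneStructure

/-- **Edge-count formula.**  Let `G` be a connected 1-plane graph with `n ≥ 3` vertices and
`m` edges.  Then `m = 3n − 6 − (A(G) + B(G))/2 − (3/4)·C(G)`. -/
theorem edge_count_formula_one_plane {V X : Type*} [Fintype V] [Fintype X]
    (G : SimpleGraph V) (H : SimpleGraph (V ⊕ X)) (S : OnePlaneStructure G H)
    (hconn : G.Connected) (hn : 3 ≤ Fintype.card V) :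
    (Nat.card G.edgeSet : ℚ) =
      3 * Fintype.card V - 6 - (S.AVal + S.BVal) / 2 - 3 / 4 * S.CVal := by
  classical
  have hH := S.planarization_connected hconn
  have hcard : 3 ≤ Fintype.card (V ⊕ X) := by rw [Fintype.card_sum]; omega
  have : Nontrivial (V ⊕ X) := Fintype.one_lt_card_iff_nontrivial.1 (by omega)
  obtain ⟨w, hw⟩ := hH.preconnected.exists_adj_of_nontrivial hH.nonempty.some
  have heuler := S.emb.euler_of_connected_s13 hH ⟨(_, w), hw⟩
  rw [facesOf_eq_coe_image, Set.ncard_coe_finset, Fintype.card_sum] at heuler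
  have hfaces := S.emb.sum_filter_ncard_sub_three hH hcard
  have hedges := S.card_edgeSet_add_two_mul_card_crossings
  have hcount := S.sum_cVal_eq_sum_aVal
  simp only [OnePlaneStructure.AVal, OnePlaneStructure.BVal, OnePlaneStructure.CVal,
    sep_facesOf_eq_coe_filter, finsum_mem_coe_finset, sum_sub_distrib, sum_const, nsmul_eq_mul, ← sum_div,
    ← Nat.cast_sum, hcount, card_univ] at hfaces ⊢
  qify at heuler hedges
  push_cast at heuler hedges hfaces ⊢
  linarith
end

section
/- Let G be a K3-free 1-plane graph and let u be an alternating vertex of G, i.e., every face of the planarization G^× incident with u is an alternating 4-face. Then the degree of u in G is at least 4. -/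
open SimpleGraph

namespace OnePlaneStructure

variable {V X : Type*} [Fintype V] [Fintype X] {G : SimpleGraph V}
  {H : SimpleGraph (V ⊕ X)}

/-- A face `F` of the planarization is an alternating `4`-face if it has degree `4` and
true and fake vertices alternate along its boundary walk (the tails of consecutive darts
of the face walk are alternately true and fake). -/
def IsAlternating4Face (S : OnePlaneStructure G H) (F : Set H.Dart) : Prop :=
  F.ncard = 4 ∧ ∀ d ∈ F,
    ((facePerm H S.emb.rot d).toProd.1).isRight ≠ (d.toProd.1).isRight

end OnePlaneStructure

/-! The two faces at `u` on either side of a dart `d` from `u` are alternating 4-cycles, so the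
head of `d` is a crossing `x`, and the corners `w`, `w'` of these faces opposite `u` are the
neighbours of `x` that are opposite in the rotation at `x`: `ww'` is the edge of `G` crossed at
`x`. Hence the opposite corners of the faces around `u`, in rotation order, form a closed walk
in `G`. With one, two or three darts at `u` this walk is a loop, an edge crossed at two
crossings, or a triangle. So `u` has at least four darts, and each is the first half of a
crossed edge at `u`, distinct darts giving distinct edges. -/

instance SimpleGraph.Dart.finite_s16 {V : Type*} [Finite V] (G : SimpleGraph V) : Finite G.Dart :=
  Finite.of_injective _ Dart.toProd_injective

namespace Equiv.Perm

theorem isCycleOn_setOf_sameCycle {α : Type*} (f : Perm α) (a : α) :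
    f.IsCycleOn {b | f.SameCycle a b} := by
  refine ⟨?_, fun _ hx _ hy => hx.symm.trans hy⟩
  convert f.bijective.bijOn_preimage (t := {b | f.SameCycle a b}) using 1
  ext b
  simp [sameCycle_apply_right]

variable {α : Type*} {f : Perm α} {s : Set α} {a : α}

theorem IsCycleOn.pow_apply_eq_self_iff_ncard_dvd (hs : s.Finite) (hf : f.IsCycleOn s)
    (ha : a ∈ s) {n : ℕ} : (f ^ n) a = a ↔ s.ncard ∣ n := by
  lift s to Finset α using hs
  rw [Set.ncard_coe_finset]
  exact hf.pow_apply_eq ha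

theorem IsCycleOn.four_le_ncard (hs : s.Finite) (hf : f.IsCycleOn s) (ha : a ∈ s)
    (h₁ : f a ≠ a) (h₂ : f (f a) ≠ a) (h₃ : f (f (f a)) ≠ a) : 4 ≤ s.ncard := by
  have hper := (hf.pow_apply_eq_self_iff_ncard_dvd hs ha).2 (dvd_refl s.ncard)
  have hpos := (Set.ncard_pos hs).2 ⟨a, ha⟩
  by_contra! hlt
  interval_cases s.ncard <;> simp_all [pow_succ]

end Equiv.Perm

theorem facePerm_apply {V : Type*} (G : SimpleGraph V) (rot : Equiv.Perm G.Dart) (d : G.Dart) :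
    facePerm G rot d = rot d.symm :=
  rfl

namespace SimpleGraph.PlaneEmbedding

variable {V : Type*} [Fintype V] {G : SimpleGraph V} (E : G.PlaneEmbedding)

theorem isCycleOn_rot (v : V) : E.rot.IsCycleOn {d | d.fst = v} := by
  refine ⟨?_, fun d hd d' hd' => E.rot_single_cycle d d' (hd.trans hd'.symm)⟩
  convert E.rot.bijective.bijOn_preimage (t := {d | d.fst = v}) using 1
  ext d
  simp [E.rot_fixes_tail]

theorem facePerm_fst (d : G.Dart) : (facePerm G E.rot d).fst = d.snd := by
  simp [facePerm_apply, E.rot_fixes_tail]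

end SimpleGraph.PlaneEmbedding

namespace OnePlaneStructure

variable {V X : Type*} [Fintype V] [Fintype X] {G : SimpleGraph V} {H : SimpleGraph (V ⊕ X)}

section

variable (S : OnePlaneStructure G H)

theorem rot_pow_four_apply_of_fst_eq_inr {e : H.Dart} {x : X} (he : e.fst = Sum.inr x) :
    (S.emb.rot ^ 4) e = e := by
  refine ((S.emb.isCycleOn_rot _).pow_apply_eq_self_iff_ncard_dvd (Set.toFinite _) he).2 ?_
  rw [← Nat.card_coe_set_eq]
  exact (S.fake_degree x).dvd

theorem crossPair_symm {x : X} {a b : V} (h : CrossPair S.emb.rot x a b) :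
    CrossPair S.emb.rot x b a := by
  obtain ⟨e, he, he₂⟩ := h
  refine ⟨S.emb.rot (S.emb.rot e), he₂, ?_⟩
  have h₄ := S.rot_pow_four_apply_of_fst_eq_inr (congrArg Prod.fst he)
  simp only [pow_succ, pow_zero, one_mul, Equiv.Perm.mul_apply] at h₄
  rw [h₄, he]

theorem adj_of_crossPair {x : X} {a b : V} (h : CrossPair S.emb.rot x a b) : G.Adj a b :=
  (S.adj_iff a b).2 (Or.inr ⟨x, h⟩)

theorem exists_crossPair_of_snd_eq_inr {d : H.Dart} {u : V} {x : X} (hd : d.fst = Sum.inl u)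
    (hx : d.snd = Sum.inr x) : ∃ v, CrossPair S.emb.rot x u v := by
  set e := S.emb.rot (S.emb.rot d.symm)
  have he : e.fst = Sum.inr x := by simp [e, S.emb.rot_fixes_tail, hx]
  obtain ⟨v, hv⟩ : ∃ v, e.snd = Sum.inl v := by
    cases h : e.snd with
    | inl v => exact ⟨v, rfl⟩
    | inr y => exact absurd (he ▸ h ▸ e.adj) (S.fake_not_adjacent x y)
  exact ⟨v, d.symm, Prod.ext hx hd, Prod.ext he hv⟩

end

theorem ncard_darts_le_card_neighborSet (S : OnePlaneStructure G H) {u : V}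
    (h : ∀ d : H.Dart, d.fst = Sum.inl u → ∃ x, d.snd = Sum.inr x) :
    {d : H.Dart | d.fst = Sum.inl u}.ncard ≤ Nat.card (G.neighborSet u) := by
  have hcross : ∀ d : {d : H.Dart | d.fst = Sum.inl u},
      ∃ v : G.neighborSet u, ∃ x, d.1.snd = Sum.inr x ∧ CrossPair S.emb.rot x u v := by
    rintro ⟨d, hd⟩
    obtain ⟨x, hx⟩ := h d hd
    obtain ⟨v, hv⟩ := S.exists_crossPair_of_snd_eq_inr hd hx
    exact ⟨⟨v, S.adj_of_crossPair hv⟩, x, hx, hv⟩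
  choose f x hx hf using hcross
  rw [← Nat.card_coe_set_eq]
  refine Nat.card_le_card_of_injective f fun d d' hdd' => Subtype.ext (Dart.ext _ _ ?_)
  have hxx : x d = x d' := S.cross_unique _ _ u _ (hf d) (hdd' ▸ hf d')
  exact Prod.ext (d.2.trans d'.2.symm) (by rw [hx, hx, hxx])

def IsAlternatingVertex (S : OnePlaneStructure G H) (u : V) : Prop :=
  ∀ d : H.Dart, d.fst = Sum.inl u → S.IsAlternating4Face (faceOf H S.emb.rot d)

namespace IsAlternatingVertex

variable {S : OnePlaneStructure G H} {u : V} {d : H.Dart}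

theorem exists_snd_eq_inr (hu : S.IsAlternatingVertex u) (hd : d.fst = Sum.inl u) :
    ∃ x, d.snd = Sum.inr x := by
  have h := (hu d hd).2 d .rfl
  rw [S.emb.facePerm_fst, hd] at h
  simpa [Sum.isRight_iff] using h

theorem exists_facePerm_snd_eq_inl (hu : S.IsAlternatingVertex u) (hd : d.fst = Sum.inl u) :
    ∃ w, (facePerm H S.emb.rot d).snd = Sum.inl w := by
  obtain ⟨x, hx⟩ := hu.exists_snd_eq_inr hd
  have h := (hu d hd).2 _ (Equiv.Perm.sameCycle_apply_right.2 .rfl)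
  rw [S.emb.facePerm_fst, S.emb.facePerm_fst, hx] at h
  simpa [Sum.isLeft_iff] using h

theorem facePerm_pow_four_apply (hu : S.IsAlternatingVertex u) (hd : d.fst = Sum.inl u) :
    (facePerm H S.emb.rot ^ 4) d = d :=
  ((Equiv.Perm.isCycleOn_setOf_sameCycle _ d).pow_apply_eq_self_iff_ncard_dvd (Set.toFinite _)
    .rfl).2 (hu d hd).1.dvd

theorem crossPair_opposite_corners (hu : S.IsAlternatingVertex u) (hd : d.fst = Sum.inl u)
    {x : X} {w w' : V} (hx : d.snd = Sum.inr x)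
    (hw : (facePerm H S.emb.rot d).snd = Sum.inl w)
    (hw' : (facePerm H S.emb.rot (S.emb.rot d)).snd = Sum.inl w') :
    CrossPair S.emb.rot x w' w := by
  have hd' : (S.emb.rot d).fst = Sum.inl u := (S.emb.rot_fixes_tail d).trans hd
  have h₄ := hu.facePerm_pow_four_apply hd'
  simp only [pow_succ, pow_zero, one_mul, Equiv.Perm.mul_apply] at h₄
  -- The face of `rot d` closes up through `d.symm`, so around `x` the dart towards `w'` is
  -- followed by `d.symm` and then by the dart towards `w`.
  set c := facePerm H S.emb.rot (facePerm H S.emb.rot (S.emb.rot d))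
  have hc : S.emb.rot c.symm = d.symm := (facePerm H S.emb.rot).injective <| by
    change facePerm H S.emb.rot (facePerm H S.emb.rot c) = _
    rw [h₄, facePerm_apply, d.symm_symm]
  have hcx : c.snd = Sum.inr x := by
    rw [← S.emb.facePerm_fst, facePerm_apply, hc]
    exact hx
  have hcw' : c.fst = Sum.inl w' := by rw [S.emb.facePerm_fst, hw']
  refine ⟨c.symm, Prod.ext hcx hcw', ?_⟩
  rw [hc, ← facePerm_apply]
  exact Prod.ext (S.emb.facePerm_fst d ▸ hx) hw

theorem rot_apply_ne_self (hu : S.IsAlternatingVertex u) (hd : d.fst = Sum.inl u) :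
    S.emb.rot d ≠ d := by
  intro h
  obtain ⟨x, hx⟩ := hu.exists_snd_eq_inr hd
  obtain ⟨w, hw⟩ := hu.exists_facePerm_snd_eq_inl hd
  exact (S.adj_of_crossPair (hu.crossPair_opposite_corners hd hx hw (by rwa [h]))).ne rfl

theorem rot_rot_apply_ne_self (hu : S.IsAlternatingVertex u) (hd : d.fst = Sum.inl u) :
    S.emb.rot (S.emb.rot d) ≠ d := by
  intro h
  have hd₁ : (S.emb.rot d).fst = Sum.inl u := (S.emb.rot_fixes_tail d).trans hd
  obtain ⟨x₀, hx₀⟩ := hu.exists_snd_eq_inr hd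
  obtain ⟨x₁, hx₁⟩ := hu.exists_snd_eq_inr hd₁
  obtain ⟨w₀, hw₀⟩ := hu.exists_facePerm_snd_eq_inl hd
  obtain ⟨w₁, hw₁⟩ := hu.exists_facePerm_snd_eq_inl hd₁
  have cp₀ := hu.crossPair_opposite_corners hd hx₀ hw₀ hw₁
  have cp₁ := hu.crossPair_opposite_corners hd₁ hx₁ hw₁ (h ▸ hw₀)
  have hx : x₀ = x₁ := S.cross_unique _ _ _ _ cp₀ (S.crossPair_symm cp₁)
  refine hu.rot_apply_ne_self hd (Dart.ext _ _ (Prod.ext (S.emb.rot_fixes_tail d) ?_))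
  rw [hx₀, hx₁, hx]

theorem rot_rot_rot_apply_ne_self (hK3 : G.CliqueFree 3) (hu : S.IsAlternatingVertex u)
    (hd : d.fst = Sum.inl u) : S.emb.rot (S.emb.rot (S.emb.rot d)) ≠ d := by
  classical
  intro h
  have hd₁ : (S.emb.rot d).fst = Sum.inl u := (S.emb.rot_fixes_tail d).trans hd
  have hd₂ : (S.emb.rot (S.emb.rot d)).fst = Sum.inl u := (S.emb.rot_fixes_tail _).trans hd₁
  obtain ⟨x₀, hx₀⟩ := hu.exists_snd_eq_inr hd
  obtain ⟨x₁, hx₁⟩ := hu.exists_snd_eq_inr hd₁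
  obtain ⟨x₂, hx₂⟩ := hu.exists_snd_eq_inr hd₂
  obtain ⟨w₀, hw₀⟩ := hu.exists_facePerm_snd_eq_inl hd
  obtain ⟨w₁, hw₁⟩ := hu.exists_facePerm_snd_eq_inl hd₁
  obtain ⟨w₂, hw₂⟩ := hu.exists_facePerm_snd_eq_inl hd₂
  have h₀₁ := S.adj_of_crossPair (hu.crossPair_opposite_corners hd hx₀ hw₀ hw₁)
  have h₁₂ := S.adj_of_crossPair (hu.crossPair_opposite_corners hd₁ hx₁ hw₁ hw₂)
  have h₂₀ := S.adj_of_crossPair (hu.crossPair_opposite_corners hd₂ hx₂ hw₂ (h ▸ hw₀))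
  exact hK3 {w₀, w₁, w₂} (is3Clique_triple_iff.2 ⟨h₀₁.symm, h₂₀, h₁₂.symm⟩)

theorem four_le_ncard_darts (hK3 : G.CliqueFree 3) (hu : S.IsAlternatingVertex u)
    (hd : d.fst = Sum.inl u) : 4 ≤ {d : H.Dart | d.fst = Sum.inl u}.ncard :=
  (S.emb.isCycleOn_rot _).four_le_ncard (Set.toFinite _) hd (hu.rot_apply_ne_self hd)
    (hu.rot_rot_apply_ne_self hd) (hu.rot_rot_rot_apply_ne_self hK3 hd)

end IsAlternatingVertex

end OnePlaneStructure

/-- Let `G` be a `K₃`-free 1-plane graph and let `u` be an alternating vertex of `G`, i.e.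
every face of the planarization `G^×` incident with `u` is an alternating `4`-face (note
that every vertex is incident with at least one face).  Then `u` has degree at least `4`
in `G`. -/
theorem k3free_one_plane_alternating_vertex_degree {V X : Type*} [Fintype V] [Fintype X]
    (G : SimpleGraph V) (H : SimpleGraph (V ⊕ X)) (S : OnePlaneStructure G H)
    (hK3 : G.CliqueFree 3) (u : V)
    (hinc : ∃ F ∈ facesOf H S.emb.rot, ∃ d ∈ F, d.toProd.1 = Sum.inl u)
    (halt : ∀ F ∈ facesOf H S.emb.rot, (∃ d ∈ F, d.toProd.1 = Sum.inl u) →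
      S.IsAlternating4Face F) :
    4 ≤ Nat.card (G.neighborSet u) := by
  obtain ⟨-, -, d, -, hd⟩ := hinc
  have hu : S.IsAlternatingVertex u := fun d hd => halt _ ⟨d, rfl⟩ ⟨d, .rfl, hd⟩
  calc 4 ≤ {d : H.Dart | d.fst = Sum.inl u}.ncard := hu.four_le_ncard_darts hK3 hd
    _ ≤ Nat.card (G.neighborSet u) :=
      S.ncard_darts_le_card_neighborSet fun _ hd => hu.exists_snd_eq_inr hd
end

section
/- Let G be a K5-free simple graph containing four distinct pairwise adjacent vertices u₁, u₂, u₃, u₄. Let G′ be the graph obtained from G by deleting the edges u₁u₃ and u₂u₄, adding four new vertices v₁, v₂, v₃, v₄, adding the cycle edges v₁v₂, v₂v₃, v₃v₄, v₄v₁, and adding, for each i ∈ {1,2,3,4}, the edges uᵢv_{i−1}, uᵢvᵢ, and uᵢv_{i+1}, where the indices of the v's are taken modulo 4 (so v₀ = v₄ and v₅ = v₁). Then G′ is K5-free. -/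
/-- The adjacency relation of the graph `G′` obtained from `G` by the `Q₄`-addition at the
4-clique `u 0, u 1, u 2, u 3`: delete the edges `u 0 – u 2` and `u 1 – u 3`, add four new
vertices `v i` (`i : Fin 4`) forming a 4-cycle `v 0 v 1 v 2 v 3`, and join each `u i` to
`v (i−1)`, `v i` and `v (i+1)` (indices of the new vertices taken modulo 4). -/
def q4Rel {V : Type*} (G : SimpleGraph V) (u : Fin 4 → V) :
    V ⊕ Fin 4 → V ⊕ Fin 4 → Prop
  | Sum.inl a, Sum.inl b => G.Adj a b ∧
      ¬((a = u 0 ∧ b = u 2) ∨ (a = u 2 ∧ b = u 0) ∨ (a = u 1 ∧ b = u 3) ∨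
        (a = u 3 ∧ b = u 1))
  | Sum.inl a, Sum.inr i => a = u (i - 1) ∨ a = u i ∨ a = u (i + 1)
  | Sum.inr _, Sum.inl _ => False
  | Sum.inr i, Sum.inr j => j = i + 1

/-- The graph `G′` obtained from `G` by the `Q₄`-addition at `u 0, u 1, u 2, u 3`. -/
def q4Addition {V : Type*} (G : SimpleGraph V) (u : Fin 4 → V) :
    SimpleGraph (V ⊕ Fin 4) :=
  SimpleGraph.fromRel (q4Rel G u)

/-! A 5-clique of `G′` avoiding the new vertices is a 5-clique of `G`, since `G′` has no edges
between old vertices that `G` lacks. A clique through a new vertex `v i` lies in its closed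
neighbourhood, which is covered by the four independent sets `{v i}`, `{v (i-1), v (i+1)}`,
`{u (i-1), u (i+1)}` and `{u i}`; the third is independent because `u (i-1) u (i+1)` is one of
the two deleted diagonals. A clique meets each independent set at most once, so it has at most
four vertices. -/

namespace SimpleGraph

variable {V : Type*} {G : SimpleGraph V}

theorem IsClique.card_le_of_subset_iUnion_isIndepSet {ι : Type*} [Fintype ι] {s : Finset V}
    (hs : G.IsClique (s : Set V)) {A : ι → Set V} (hA : ∀ i, G.IsIndepSet (A i))
    (hsub : (s : Set V) ⊆ ⋃ i, A i) : s.card ≤ Fintype.card ι := by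
  classical
  have hcover : s ⊆ Finset.univ.biUnion fun i ↦ s.filter (· ∈ A i) := fun x hx ↦ by
    obtain ⟨i, hi⟩ := Set.mem_iUnion.1 (hsub hx)
    exact Finset.mem_biUnion.2 ⟨i, Finset.mem_univ _, Finset.mem_filter.2 ⟨hx, hi⟩⟩
  have hmeet : ∀ i, (s.filter (· ∈ A i)).card ≤ 1 := fun i ↦ by
    refine Finset.card_le_one.2 fun x hx y hy ↦ by_contra fun hxy ↦ ?_
    rw [Finset.mem_filter] at hx hy
    exact hA i hx.2 hy.2 hxy (hs hx.1 hy.1 hxy)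
  calc s.card ≤ ∑ i, (s.filter (· ∈ A i)).card :=
        (Finset.card_le_card hcover).trans Finset.card_biUnion_le
    _ ≤ ∑ _i : ι, 1 := Finset.sum_le_sum fun i _ ↦ hmeet i
    _ = Fintype.card ι := by simp

end SimpleGraph

namespace Q4Addition

open SimpleGraph

variable {V : Type*} {G : SimpleGraph V} {u : Fin 4 → V}

@[simp]
theorem adj_inl_inl {a b : V} :
    (q4Addition G u).Adj (.inl a) (.inl b) ↔
      G.Adj a b ∧ s(a, b) ≠ s(u 0, u 2) ∧ s(a, b) ≠ s(u 1, u 3) := by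
  simp only [q4Addition, fromRel_adj, q4Rel, ne_eq, Sym2.eq_iff]
  constructor
  · rintro ⟨-, h | h⟩
    · tauto
    · exact ⟨h.1.symm, by tauto⟩
  · rintro ⟨h, h'⟩
    exact ⟨Sum.inl_injective.ne h.ne, Or.inl ⟨h, by tauto⟩⟩

@[simp]
theorem adj_inl_inr {a : V} {i : Fin 4} :
    (q4Addition G u).Adj (.inl a) (.inr i) ↔ a = u (i - 1) ∨ a = u i ∨ a = u (i + 1) := by
  simp [q4Addition, q4Rel]

@[simp]
theorem adj_inr_inl {a : V} {i : Fin 4} :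
    (q4Addition G u).Adj (.inr i) (.inl a) ↔ a = u (i - 1) ∨ a = u i ∨ a = u (i + 1) := by
  rw [adj_comm, adj_inl_inr]

@[simp]
theorem adj_inr_inr {i j : Fin 4} :
    (q4Addition G u).Adj (.inr i) (.inr j) ↔ j = i + 1 ∨ i = j + 1 := by
  simp only [q4Addition, fromRel_adj, q4Rel, ne_eq, Sum.inr.injEq, and_iff_right_iff_imp]
  revert i j; decide

theorem not_adj_inr_sub_one_inr_add_one (i : Fin 4) :
    ¬ (q4Addition G u).Adj (.inr (i - 1)) (.inr (i + 1)) := by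
  rw [adj_inr_inr]; revert i; decide

theorem not_adj_inl_sub_one_inl_add_one (i : Fin 4) :
    ¬ (q4Addition G u).Adj (.inl (u (i - 1))) (.inl (u (i + 1))) := by
  rw [adj_inl_inl]
  fin_cases i <;> simp [Sym2.eq_swap, show (-1 : Fin 4) = 3 from rfl]

theorem card_le_four_of_isClique_of_inr_mem {s : Finset (V ⊕ Fin 4)}
    (hs : (q4Addition G u).IsClique (s : Set (V ⊕ Fin 4))) {i : Fin 4} (hi : .inr i ∈ s) :
    s.card ≤ 4 := by
  let A : Fin 4 → Set (V ⊕ Fin 4) := ![{.inr i}, {.inr (i - 1), .inr (i + 1)},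
    {.inl (u (i - 1)), .inl (u (i + 1))}, {.inl (u i)}]
  have hA : ∀ k, (q4Addition G u).IsIndepSet (A k) := by
    intro k
    fin_cases k
    · exact Set.subsingleton_singleton.pairwise _
    · exact Set.pairwise_pair.2 fun _ ↦ ⟨not_adj_inr_sub_one_inr_add_one i,
        fun h ↦ not_adj_inr_sub_one_inr_add_one i h.symm⟩
    · exact Set.pairwise_pair.2 fun _ ↦ ⟨not_adj_inl_sub_one_inl_add_one i,
        fun h ↦ not_adj_inl_sub_one_inl_add_one i h.symm⟩
    · exact Set.subsingleton_singleton.pairwise _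
  have hcover : (s : Set (V ⊕ Fin 4)) ⊆ ⋃ k, A k := by
    intro x hx
    rw [Set.mem_iUnion]
    obtain rfl | hne := eq_or_ne x (.inr i)
    · exact ⟨0, by simp [A]⟩
    have hadj := hs hi hx hne.symm
    rcases x with a | j
    · obtain rfl | rfl | rfl := adj_inr_inl.1 hadj
      · exact ⟨2, by simp [A]⟩
      · exact ⟨3, by simp [A]⟩
      · exact ⟨2, by simp [A]⟩
    · obtain rfl | rfl := adj_inr_inr.1 hadj
      · exact ⟨1, by simp [A]⟩
      · exact ⟨1, by simp [A]⟩
  simpa using hs.card_le_of_subset_iUnion_isIndepSet hA hcover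

theorem isClique_map_inl_of_subset_range_inl {s : Set (V ⊕ Fin 4)}
    (hs : (q4Addition G u).IsClique s) (hsub : s ⊆ Set.range Sum.inl) :
    (G.map Function.Embedding.inl).IsClique s := by
  rintro _ hx _ hy hxy
  obtain ⟨a, rfl⟩ := hsub hx
  obtain ⟨b, rfl⟩ := hsub hy
  exact (map_adj_apply (f := .inl)).2 (adj_inl_inl.1 (hs hx hy hxy)).1

end Q4Addition

theorem q4Addition_cliqueFree_five_general {V : Type*} (G : SimpleGraph V) (u : Fin 4 → V)
    (hK5 : G.CliqueFree 5) :
    (q4Addition G u).CliqueFree 5 := by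
  rintro s ⟨hs, hcard⟩
  by_cases hnew : ∃ i, .inr i ∈ s
  · obtain ⟨i, hi⟩ := hnew
    have hle := Q4Addition.card_le_four_of_isClique_of_inr_mem hs hi
    omega
  · have hold : (s : Set (V ⊕ Fin 4)) ⊆ Set.range Sum.inl := by
      rintro (a | i) hx
      · exact ⟨a, rfl⟩
      · exact absurd ⟨i, hx⟩ hnew
    have : Nonempty V := ⟨u 0⟩
    exact SimpleGraph.cliqueFree_map_iff.2 hK5 s
      ⟨Q4Addition.isClique_map_inl_of_subset_range_inl hs hold, hcard⟩

/-- Let `G` be a `K₅`-free simple graph containing four distinct pairwise adjacent vertices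
`u 0, u 1, u 2, u 3`.  Then the graph `G′` obtained from `G` by the `Q₄`-addition (deleting
the edges `u 0 – u 2` and `u 1 – u 3`, inserting a 4-cycle on four new vertices
`v 0, v 1, v 2, v 3`, and joining each `u i` to `v (i−1)`, `v i`, `v (i+1)`) is
`K₅`-free. -/
theorem q4Addition_cliqueFree_five {V : Type*} (G : SimpleGraph V) (u : Fin 4 → V)
    (hdist : Function.Injective u)
    (hadj : ∀ i j : Fin 4, i ≠ j → G.Adj (u i) (u j))
    (hK5 : G.CliqueFree 5) :
    (q4Addition G u).CliqueFree 5 :=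
  q4Addition_cliqueFree_five_general G u hK5
end
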